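/- Let n ≥ 2 be an integer and let a ≥ 0 be a real number satisfying a(1 + ε_a) ≤ 1. Then for every integer j with 2 ≤ j ≤ ⌊n/2⌋ one has φ̂_a(j) ≤ φ̂_a(j−1); that is, φ̂_a(1) ≥ φ̂_a(2) ≥ … ≥ φ̂_a(⌊n/2⌋). -/

import Mathlib

open scoped BigOperators

noncomputable def psi (n : ℕ) (a : ℝ) (j : ℕ) : ℝ :=
  ∑' k : ℕ, a ^ (j + k * n) / (Nat.factorial (j + k * n) : ℝ)

noncomputable def phiHat (n : ℕ) (a : ℝ) (j : ℤ) : ℝ :=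
  ∑ k ∈ Finset.range n, ∑ k' ∈ Finset.range n,
    if ((k' : ℤ) - (k : ℤ)) % (n : ℤ) = j % (n : ℤ) then psi n a k * psi n a k' else 0

noncomputable def phi (n : ℕ) (a : ℝ) (j : ℤ) : ℝ :=
  phiHat n a j / phiHat n a 0

noncomputable def eps (n : ℕ) (a : ℝ) : ℝ :=
  (1 + 2 * a * Real.exp a) * (1 + a ^ n * Real.exp a / (Nat.factorial n : ℝ)) ^ 2 - 1

noncomputable def zeta (n : ℕ) (a : ℝ) : ℝ :=
  ∑ j ∈ Finset.Ico 1 n, phi n a (j : ℤ)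

noncomputable def xi (n : ℕ) (a : ℝ) : ℝ :=
  sSup ((fun j : ℕ => phi n a (j : ℤ)) '' Set.Ico 1 n)

noncomputable def eta (n : ℕ) (a : ℝ) : ℝ :=
  sInf ((fun j : ℕ => phi n a ((j : ℤ) + 1) / phi n a (j : ℤ)) '' Set.Iio n)

noncomputable def alpha (n : ℕ) (b k : ℝ) : ℝ :=
  (∑ j ∈ Finset.range n,
      phi n b (j : ℤ) * (phi n k (j : ℤ)) ^ 4 *
        (phi n k ((j : ℤ) + 1) / (phi n k (j : ℤ) * phi n k 1))) /
    (∑ j ∈ Finset.range n, phi n b (j : ℤ) * (phi n k (j : ℤ)) ^ 4)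

noncomputable def rho (n : ℕ) (g : ℕ) : ℂ :=
  Complex.exp (2 * (Real.pi : ℂ) * Complex.I * (g : ℂ) / (n : ℂ))

noncomputable def etaHat (n : ℕ) (a : ℝ) : ℂ :=
  (∑ g ∈ Finset.range n, rho n g * (Real.exp (2 * a * (rho n g).re) : ℂ)) /
    (∑ g ∈ Finset.range n, (Real.exp (2 * a * (rho n g).re) : ℂ))

lemma psi_summable (n : ℕ) (hn : 1 ≤ n) (a : ℝ) (m : ℕ) :
    Summable (fun k : ℕ => a ^ (m + k * n) / (Nat.factorial (m + k * n) : ℝ)) := by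
  have h := Real.summable_pow_div_factorial a
  have hi : Function.Injective (fun k : ℕ => m + k * n) := by
    intro x y hxy
    simp only at hxy
    exact Nat.eq_of_mul_eq_mul_right hn (Nat.add_left_cancel hxy)
  exact h.comp_injective hi

lemma psi_nonneg (n : ℕ) (a : ℝ) (ha : 0 ≤ a) (m : ℕ) : 0 ≤ psi n a m :=
  tsum_nonneg fun k => div_nonneg (pow_nonneg ha _) (by positivity)

lemma psi_term_le (a : ℝ) (ha : 0 ≤ a) (ha1 : a ≤ 1) {p q : ℕ} (hpq : p ≤ q) :
    a ^ q / (Nat.factorial q : ℝ) ≤ a ^ p / (Nat.factorial p : ℝ) := by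
  apply div_le_div₀ (pow_nonneg ha _) (pow_le_pow_of_le_one ha ha1 hpq)
    (by positivity)
  exact_mod_cast Nat.factorial_le hpq

lemma psi_succ_le (n : ℕ) (hn : 1 ≤ n) (a : ℝ) (ha : 0 ≤ a) (ha1 : a ≤ 1) (m : ℕ) :
    psi n a (m + 1) ≤ psi n a m := by
  refine Summable.tsum_le_tsum (fun k => ?_) (psi_summable n hn a _) (psi_summable n hn a _)
  exact psi_term_le a ha ha1 (by omega)

lemma le_psi (n : ℕ) (hn : 1 ≤ n) (a : ℝ) (ha : 0 ≤ a) (m : ℕ) :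
    a ^ m / (Nat.factorial m : ℝ) ≤ psi n a m := by
  have := Summable.le_tsum (psi_summable n hn a m) 0
    (fun k _ => div_nonneg (pow_nonneg ha _) (by positivity))
  simpa [psi] using this

lemma psi_le (n : ℕ) (hn : 4 ≤ n) (a : ℝ) (ha : 0 ≤ a) (ha2 : a ≤ 1/2) (m : ℕ) :
    psi n a m ≤ (16/15) * (a ^ m / (Nat.factorial m : ℝ)) := by
  have hsum : Summable (fun k : ℕ => (a ^ m / (Nat.factorial m : ℝ)) * (1/16 : ℝ) ^ k) :=
    (summable_geometric_of_lt_one (by norm_num) (by norm_num)).mul_left _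
  have hle : ∀ k : ℕ, a ^ (m + k * n) / (Nat.factorial (m + k * n) : ℝ)
      ≤ (a ^ m / (Nat.factorial m : ℝ)) * (1/16 : ℝ) ^ k := by
    intro k
    have h1 : a ^ (m + k * n) = a ^ m * (a ^ n) ^ k := by
      rw [← pow_mul, ← pow_add]; ring_nf
    have h2 : (a ^ n) ^ k ≤ ((1:ℝ)/16) ^ k := by
      apply pow_le_pow_left₀ (pow_nonneg ha _)
      calc a ^ n ≤ (1/2 : ℝ) ^ n := pow_le_pow_left₀ ha ha2 n
        _ ≤ (1/2 : ℝ) ^ 4 := pow_le_pow_of_le_one (by norm_num) (by norm_num) hn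
        _ = 1/16 := by norm_num
    have h3 : (Nat.factorial m : ℝ) ≤ (Nat.factorial (m + k * n) : ℝ) := by
      exact_mod_cast Nat.factorial_le (by omega)
    have h4 : a ^ (m + k * n) / (Nat.factorial (m + k * n) : ℝ)
        ≤ a ^ (m + k * n) / (Nat.factorial m : ℝ) := by
      apply div_le_div_of_nonneg_left (pow_nonneg ha _) (by positivity) h3
    calc a ^ (m + k * n) / (Nat.factorial (m + k * n) : ℝ)
        ≤ a ^ (m + k * n) / (Nat.factorial m : ℝ) := h4
      _ = (a ^ m / (Nat.factorial m : ℝ)) * (a ^ n) ^ k := by rw [h1]; ring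
      _ ≤ (a ^ m / (Nat.factorial m : ℝ)) * (1/16) ^ k := by
          apply mul_le_mul_of_nonneg_left h2 (by positivity)
  calc psi n a m ≤ ∑' k : ℕ, (a ^ m / (Nat.factorial m : ℝ)) * (1/16 : ℝ) ^ k :=
        Summable.tsum_le_tsum hle (psi_summable n (by omega) a m) hsum
    _ = (a ^ m / (Nat.factorial m : ℝ)) * (1 - 1/16)⁻¹ := by
        rw [tsum_mul_left, tsum_geometric_of_lt_one (by norm_num) (by norm_num)]
    _ = (16/15) * (a ^ m / (Nat.factorial m : ℝ)) := by ring

lemma phiHat_eq (n : ℕ) (a : ℝ) (j : ℕ) :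
    phiHat n a (j : ℤ) = ∑ k ∈ Finset.range n, psi n a k * psi n a ((k + j) % n) := by
  unfold phiHat
  refine Finset.sum_congr rfl fun k hk => ?_
  rw [Finset.mem_range] at hk
  have hn : 1 ≤ n := by omega
  rw [Finset.sum_eq_single ((k + j) % n)]
  · rw [if_pos]
    rw [Int.natCast_mod]
    push_cast
    rw [Int.sub_emod, Int.emod_emod_of_dvd _ dvd_rfl, ← Int.sub_emod, add_sub_cancel_left]
  · intro k' hk' hne
    rw [Finset.mem_range] at hk'
    rw [if_neg]
    intro hc
    apply hne
    have h3 : (k' : ℤ) % n = ((k : ℤ) + j) % n := by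
      have h4 : ((k : ℤ) + ((k' : ℤ) - k)) % n = ((k : ℤ) + j) % n := by
        rw [Int.add_emod, hc, ← Int.add_emod]
      simpa using h4
    rw [Int.emod_eq_of_lt (by positivity) (by exact_mod_cast hk')] at h3
    have h5 : (k' : ℤ) = (((k + j) % n : ℕ) : ℤ) := by rw [Int.natCast_mod]; push_cast; exact h3
    exact_mod_cast h5
  · intro hmem
    exact absurd (Finset.mem_range.mpr (Nat.mod_lt _ (by omega))) hmem

set_option maxHeartbeats 1000000 in
theorem statement6 (n : ℕ) (hn : 2 ≤ n) (a : ℝ) (ha : 0 ≤ a)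
    (h : a * (1 + eps n a) ≤ 1) (j : ℕ) (hj1 : 2 ≤ j) (hj2 : j ≤ n / 2) :
    phiHat n a (j : ℤ) ≤ phiHat n a ((j : ℤ) - 1) := by
  -- basic numeric facts
  have hn4 : 4 ≤ n := by omega
  have hjn : j < n := by omega
  have hnj : j ≤ n - j := by omega
  -- a ≤ 1/2
  have hexp : (1:ℝ) ≤ Real.exp a := Real.one_le_exp ha
  have hx : (0:ℝ) ≤ a ^ n * Real.exp a / (Nat.factorial n : ℝ) := by positivity
  have heps : 2 * a ≤ eps n a := by
    unfold eps
    nlinarith [sq_nonneg (a ^ n * Real.exp a / (Nat.factorial n : ℝ)),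
      mul_nonneg ha (Real.exp_nonneg a)]
  have ha2 : a ≤ 1/2 := by nlinarith
  have ha1 : a ≤ 1 := by linarith
  -- rewrite phiHat
  have hcast : ((j : ℤ) - 1) = ((j - 1 : ℕ) : ℤ) := by omega
  rw [hcast, phiHat_eq n a j, phiHat_eq n a (j - 1)]
  rw [← sub_nonneg, ← Finset.sum_sub_distrib]
  have hterm : ∀ k, psi n a k * psi n a ((k + (j - 1)) % n) - psi n a k * psi n a ((k + j) % n)
      = psi n a k * (psi n a ((k + (j - 1)) % n) - psi n a ((k + j) % n)) := fun k => by ring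
  -- nonnegativity of terms k ≠ n - j
  have hpos : ∀ k ∈ Finset.range n \ {n - j},
      0 ≤ psi n a k * psi n a ((k + (j - 1)) % n) - psi n a k * psi n a ((k + j) % n) := by
    intro k hk
    rw [Finset.mem_sdiff, Finset.mem_range, Finset.mem_singleton] at hk
    obtain ⟨hk1, hk2⟩ := hk
    rw [hterm]
    apply mul_nonneg (psi_nonneg n a ha k)
    rw [sub_nonneg]
    have hmod : (k + j) % n = (k + (j - 1)) % n + 1 := by
      rcases lt_or_ge (k + j) n with hc | hc
      · rw [Nat.mod_eq_of_lt hc, Nat.mod_eq_of_lt (by omega)]; omega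
      · have hc2 : k + j < 2 * n := by omega
        have hc3 : k + (j - 1) ≥ n := by omega
        rw [Nat.mod_eq_sub_mod hc, Nat.mod_eq_sub_mod hc3,
          Nat.mod_eq_of_lt (by omega), Nat.mod_eq_of_lt (by omega)]
        omega
    rw [hmod]
    exact psi_succ_le n (by omega) a ha ha1 _
  -- split off the term k = n - j
  have hmem : n - j ∈ Finset.range n := Finset.mem_range.mpr (by omega)
  rw [← Finset.sum_sdiff (Finset.singleton_subset_iff.mpr hmem), Finset.sum_singleton]
  have h0mem : 0 ∈ Finset.range n \ {n - j} := by
    rw [Finset.mem_sdiff, Finset.mem_range, Finset.mem_singleton]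
    constructor <;> omega
  have hrest : psi n a 0 * psi n a ((0 + (j - 1)) % n) - psi n a 0 * psi n a ((0 + j) % n)
      ≤ ∑ k ∈ Finset.range n \ {n - j},
        (psi n a k * psi n a ((k + (j - 1)) % n) - psi n a k * psi n a ((k + j) % n)) := by
    exact Finset.single_le_sum hpos h0mem
  -- compute the special indices
  have e1 : (0 + (j - 1)) % n = j - 1 := by
    rw [Nat.zero_add]; exact Nat.mod_eq_of_lt (by omega)
  have e2 : (0 + j) % n = j := by
    rw [Nat.zero_add]; exact Nat.mod_eq_of_lt hjn
  have e3 : (n - j + (j - 1)) % n = n - 1 := by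
    have hnn : n - j + (j - 1) = n - 1 := by omega
    rw [hnn]; exact Nat.mod_eq_of_lt (by omega)
  have e4 : (n - j + j) % n = 0 := by
    have : n - j + j = n := by omega
    rw [this, Nat.mod_self]
  rw [e1, e2] at hrest
  rw [e3, e4]
  -- key numerical inequality: psi (j-1) - psi j - psi (n-j) ≥ 0
  have hfac : (0:ℝ) < (Nat.factorial (j-1) : ℝ) := by positivity
  have hfacj : (Nat.factorial j : ℝ) = (j : ℝ) * (Nat.factorial (j-1) : ℝ) := by
    have : j = (j - 1) + 1 := by omega
    rw [this]
    push_cast [Nat.factorial_succ]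
    ring_nf
  have hupj : psi n a j ≤ (16/15) * (a ^ j / (Nat.factorial j : ℝ)) := psi_le n hn4 a ha ha2 j
  have hupnj : psi n a (n - j) ≤ (16/15) * (a ^ j / (Nat.factorial j : ℝ)) := by
    refine le_trans (psi_le n hn4 a ha ha2 (n - j)) ?_
    have := psi_term_le a ha ha1 hnj
    nlinarith [this]
  have hlow : a ^ (j-1) / (Nat.factorial (j-1) : ℝ) ≤ psi n a (j-1) := le_psi n (by omega) a ha (j-1)
  have hratio : a ^ j / (Nat.factorial j : ℝ)
      ≤ (1/4) * (a ^ (j-1) / (Nat.factorial (j-1) : ℝ)) := by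
    have hpow : a ^ j = a * a ^ (j - 1) := by
      have : j = 1 + (j - 1) := by omega
      nth_rewrite 1 [this]
      rw [pow_add, pow_one]
    rw [hpow, hfacj]
    have hj2R : (2:ℝ) ≤ (j : ℝ) := by exact_mod_cast hj1
    have hpnn : (0:ℝ) ≤ a ^ (j-1) := pow_nonneg ha _
    have hjpos : (0:ℝ) < (j : ℝ) * (Nat.factorial (j-1) : ℝ) :=
      mul_pos (by linarith) hfac
    rw [div_le_iff₀ hjpos]
    have hre : 1/4 * (a ^ (j-1) / (Nat.factorial (j-1) : ℝ)) * ((j:ℝ) * (Nat.factorial (j-1) : ℝ))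
        = (j:ℝ) * a ^ (j-1) / 4 := by
      field_simp
    rw [hre]
    nlinarith [mul_le_mul_of_nonneg_right ha2 hpnn, mul_le_mul_of_nonneg_right hj2R hpnn]
  have hkey : psi n a j + psi n a (n - j) ≤ psi n a (j - 1) := by
    calc psi n a j + psi n a (n - j)
        ≤ (32/15) * (a ^ j / (Nat.factorial j : ℝ)) := by linarith
      _ ≤ (32/15) * ((1/4) * (a ^ (j-1) / (Nat.factorial (j-1) : ℝ))) := by
          apply mul_le_mul_of_nonneg_left hratio (by norm_num)
      _ ≤ a ^ (j-1) / (Nat.factorial (j-1) : ℝ) := by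
          have : (0:ℝ) ≤ a ^ (j-1) / (Nat.factorial (j-1) : ℝ) := by positivity
          nlinarith
      _ ≤ psi n a (j - 1) := hlow
  -- finish
  have hψ0 : 0 ≤ psi n a 0 := psi_nonneg n a ha 0
  have hψnj : 0 ≤ psi n a (n - j) := psi_nonneg n a ha (n - j)
  have hψn1 : 0 ≤ psi n a (n - 1) := psi_nonneg n a ha (n - 1)
  have hψ0le : psi n a (n - j) ≤ psi n a 0 := by
    -- psi antitone: iterate psi_succ_le
    have anti : ∀ m : ℕ, psi n a m ≤ psi n a 0 := by
      intro m
      induction m with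
      | zero => exact le_refl _
      | succ i ih => exact le_trans (psi_succ_le n (by omega) a ha ha1 i) ih
    exact anti (n - j)
  have hA : psi n a 0 * psi n a (n - j) ≤ psi n a 0 * (psi n a (j - 1) - psi n a j) :=
    mul_le_mul_of_nonneg_left (by linarith) hψ0
  nlinarith [hrest, hA, mul_nonneg hψnj hψn1]
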